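/- arXiv:math/0505536 — 3 statements merged into one kernel-verified Lean document; each statement's English description precedes it below -/
import Mathlib

section
/- Let Θ: ℝ^m → ℝ^m be L-Lipschitz with 0 ≤ L < 1, and let φ_n: ℝ^{nm} → ℝ^{nm} map (z_0, y_1, …, y_{n-1}) to (z_0, z_1, …, z_{n-1}) via the recursion z_{k+1} = Θ(z_k) + y_{k+1}. Then φ_n is Lipschitz on (ℝ^{nm}, ℓ²) with Lipschitz constant at most (1-L)^{-1}. -/
open MeasureTheory Real

variable {m : ℕ}

/-- The solution sequence of the recursion `z_{k+1} = Θ(z_k) + y_{k+1}`, where the input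
`w` encodes `w 0 = z_0` and `w k = y_k` for `k ≥ 1`. -/
noncomputable def armaSeq (Θ : EuclideanSpace ℝ (Fin m) → EuclideanSpace ℝ (Fin m))
    (w : ℕ → EuclideanSpace ℝ (Fin m)) : ℕ → EuclideanSpace ℝ (Fin m)
  | 0 => w 0
  | k + 1 => Θ (armaSeq Θ w k) + w (k + 1)

/-- The map `φ_n : (z_0, y_1, …, y_{n-1}) ↦ (z_0, z_1, …, z_{n-1})` on `(ℝ^{nm}, ℓ²)`. -/
noncomputable def armaMap (n : ℕ) (Θ : EuclideanSpace ℝ (Fin m) → EuclideanSpace ℝ (Fin m))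
    (w : PiLp 2 (fun _ : Fin n => EuclideanSpace ℝ (Fin m))) :
    PiLp 2 (fun _ : Fin n => EuclideanSpace ℝ (Fin m)) :=
  WithLp.toLp 2 (fun i => armaSeq Θ (fun k => if h : k < n then w ⟨k, h⟩ else 0) (i : ℕ))

/-!
Write `d k = ‖z_k - z'_k‖` and `e k` for the distance of the `k`-th inputs. Then `d 0 = e 0`
and `d (k+1) ≤ L d k + e (k+1)`. Squaring with the weights `L` and `1 - L`,
`d (k+1)² ≤ L d k² + (1 - L)⁻¹ e (k+1)²`, and summing over `k < n` gives
`∑ d k² ≤ L ∑ d k² + (1 - L)⁻¹ ∑ e k²`, i.e. `∑ d k² ≤ (1 - L)⁻² ∑ e k²`.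
-/

/-- Jensen for `x ↦ x²` at `L • a + (1 - L) • (b / (1 - L))`. -/
lemma sq_mul_add_le {L : ℝ} (hL0 : 0 ≤ L) (hL1 : L < 1) (a b : ℝ) :
    (L * a + b) ^ 2 ≤ L * a ^ 2 + (1 - L)⁻¹ * b ^ 2 := by
  have h1L : 0 < 1 - L := by linarith
  have key : L * a ^ 2 + (1 - L)⁻¹ * b ^ 2 - (L * a + b) ^ 2
      = L * (1 - L)⁻¹ * ((1 - L) * a - b) ^ 2 := by
    field_simp
    ring
  have : 0 ≤ L * (1 - L)⁻¹ * ((1 - L) * a - b) ^ 2 := by positivity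
  linarith

lemma one_sub_mul_sum_range_le_of_le_mul_add {a b : ℕ → ℝ} {L : ℝ} (hL0 : 0 ≤ L)
    (ha : ∀ k, 0 ≤ a k) (h0 : a 0 ≤ b 0) (hrec : ∀ k, a (k + 1) ≤ L * a k + b (k + 1))
    (n : ℕ) : (1 - L) * ∑ k ∈ Finset.range n, a k ≤ ∑ k ∈ Finset.range n, b k := by
  cases n with
  | zero => simp
  | succ n =>
    have hstep : ∑ k ∈ Finset.range n, a (k + 1)
        ≤ L * ∑ k ∈ Finset.range n, a k + ∑ k ∈ Finset.range n, b (k + 1) := by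
      rw [Finset.mul_sum, ← Finset.sum_add_distrib]
      exact Finset.sum_le_sum fun k _ => hrec k
    calc (1 - L) * ∑ k ∈ Finset.range (n + 1), a k
        = ∑ k ∈ Finset.range n, a (k + 1) + a 0
            - L * (∑ k ∈ Finset.range n, a k + a n) := by
          rw [← Finset.sum_range_succ a, ← Finset.sum_range_succ' a]
          ring
      _ ≤ ∑ k ∈ Finset.range n, b (k + 1) + b 0 := by linarith [mul_nonneg hL0 (ha n)]
      _ = ∑ k ∈ Finset.range (n + 1), b k := (Finset.sum_range_succ' b n).symm

lemma dist_armaSeq_succ_le {K : NNReal}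
    {Θ : EuclideanSpace ℝ (Fin m) → EuclideanSpace ℝ (Fin m)} (hΘ : LipschitzWith K Θ)
    (w w' : ℕ → EuclideanSpace ℝ (Fin m)) (k : ℕ) :
    dist (armaSeq Θ w (k + 1)) (armaSeq Θ w' (k + 1))
      ≤ K * dist (armaSeq Θ w k) (armaSeq Θ w' k) + dist (w (k + 1)) (w' (k + 1)) :=
  (dist_add_add_le _ _ _ _).trans (add_le_add_left (hΘ.dist_le_mul _ _) _)

lemma sum_range_dist_armaSeq_sq_le {L : ℝ} (hL0 : 0 ≤ L) (hL1 : L < 1)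
    {Θ : EuclideanSpace ℝ (Fin m) → EuclideanSpace ℝ (Fin m)}
    (hΘ : LipschitzWith (Real.toNNReal L) Θ) (w w' : ℕ → EuclideanSpace ℝ (Fin m))
    (n : ℕ) : ∑ k ∈ Finset.range n, dist (armaSeq Θ w k) (armaSeq Θ w' k) ^ 2
      ≤ ((1 - L)⁻¹) ^ 2 * ∑ k ∈ Finset.range n, dist (w k) (w' k) ^ 2 := by
  have h1L : 0 < 1 - L := by linarith
  have hsq_rec : ∀ k, dist (armaSeq Θ w (k + 1)) (armaSeq Θ w' (k + 1)) ^ 2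
      ≤ L * dist (armaSeq Θ w k) (armaSeq Θ w' k) ^ 2
        + (1 - L)⁻¹ * dist (w (k + 1)) (w' (k + 1)) ^ 2 := by
    intro k
    have hlin := dist_armaSeq_succ_le hΘ w w' k
    rw [Real.coe_toNNReal L hL0] at hlin
    exact (pow_le_pow_left₀ dist_nonneg hlin 2).trans (sq_mul_add_le hL0 hL1 _ _)
  have hsq_zero : dist (w 0) (w' 0) ^ 2 ≤ (1 - L)⁻¹ * dist (w 0) (w' 0) ^ 2 :=
    le_mul_of_one_le_left (sq_nonneg _) (one_le_inv₀ h1L |>.mpr (by linarith))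
  have hsum := one_sub_mul_sum_range_le_of_le_mul_add
    (a := fun k => dist (armaSeq Θ w k) (armaSeq Θ w' k) ^ 2)
    (b := fun k => (1 - L)⁻¹ * dist (w k) (w' k) ^ 2)
    hL0 (fun _ => sq_nonneg _) hsq_zero hsq_rec n
  rw [← Finset.mul_sum] at hsum
  set S := ∑ k ∈ Finset.range n, dist (armaSeq Θ w k) (armaSeq Θ w' k) ^ 2
  set E := ∑ k ∈ Finset.range n, dist (w k) (w' k) ^ 2
  calc S = (1 - L)⁻¹ * ((1 - L) * S) := by field_simp
    _ ≤ (1 - L)⁻¹ * ((1 - L)⁻¹ * E) := by gcongr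
    _ = ((1 - L)⁻¹) ^ 2 * E := by ring

/-- If `Θ` is `L`-Lipschitz with `0 ≤ L < 1`, then `φ_n` is Lipschitz on `(ℝ^{nm}, ℓ²)`
with constant at most `(1 - L)⁻¹`. -/
theorem armaMap_lipschitz_of_lt_one (n : ℕ) (L : ℝ) (hL0 : 0 ≤ L) (hL1 : L < 1)
    (Θ : EuclideanSpace ℝ (Fin m) → EuclideanSpace ℝ (Fin m))
    (hΘ : LipschitzWith (Real.toNNReal L) Θ) :
    ∀ w w' : PiLp 2 (fun _ : Fin n => EuclideanSpace ℝ (Fin m)),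
      dist (armaMap n Θ w) (armaMap n Θ w') ≤ (1 - L)⁻¹ * dist w w' := by
  intro w w'
  set extend : PiLp 2 (fun _ : Fin n => EuclideanSpace ℝ (Fin m)) → ℕ →
      EuclideanSpace ℝ (Fin m) := fun v k => if h : k < n then v ⟨k, h⟩ else 0
  have hlhs : dist (armaMap n Θ w) (armaMap n Θ w') ^ 2
      = ∑ k ∈ Finset.range n,
          dist (armaSeq Θ (extend w) k) (armaSeq Θ (extend w') k) ^ 2 := by
    rw [PiLp.dist_sq_eq_of_L2, ← Fin.sum_univ_eq_sum_range]
    rfl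
  have hrhs : dist w w' ^ 2 = ∑ k ∈ Finset.range n, dist (extend w k) (extend w' k) ^ 2 := by
    rw [PiLp.dist_sq_eq_of_L2, ← Fin.sum_univ_eq_sum_range]
    simp [extend]
  have hsq : dist (armaMap n Θ w) (armaMap n Θ w') ^ 2 ≤ ((1 - L)⁻¹ * dist w w') ^ 2 := by
    rw [mul_pow, hlhs, hrhs]
    exact sum_range_dist_armaSeq_sq_le hL0 hL1 hΘ _ _ n
  have h1L : 0 ≤ (1 - L)⁻¹ := inv_nonneg.mpr (by linarith)
  exact (sq_le_sq₀ dist_nonneg (mul_nonneg h1L dist_nonneg)).mp hsq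
end

section
/- Let A be an m×m real matrix with spectral radius ρ(A) < 1. Then Σ_{j=0}^∞ ρ^{-j} ‖A^j‖² < ∞ for any ρ with ρ(A)² < ρ < 1 (where ‖·‖ is the operator norm on ℓ²), and there exists an invertible m×m matrix S with ‖S‖‖S^{-1}‖ ≤ Σ_{j=0}^∞ ρ^{-j}‖A^j‖² and a matrix C with ‖C‖ ≤ 1 such that A = √ρ · S^{-1} C S. -/
open Matrix Real

/-- The operator norm of a real square matrix acting on Euclidean space `ℓ²`. -/
noncomputable def matOpNorm {m : ℕ} (A : Matrix (Fin m) (Fin m) ℝ) : ℝ :=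
  ‖Matrix.toEuclideanCLM (𝕜 := ℝ) A‖

/-!
By Gelfand's formula for the complexification of `A`, `‖Aʲ‖ ≤ tʲ` eventually for some `t < √ρ`,
so `Q = ∑ⱼ ρ⁻ʲ (Aʲ)ᵀ Aʲ` converges. Any `S` with `Sᵀ S = Q` (e.g. `S = √Q`) satisfies
`‖S v‖² = ∑ⱼ ρ⁻ʲ ‖Aʲ v‖²`. The `j = 0` term gives `‖v‖ ≤ ‖S v‖`, i.e. `‖S⁻¹‖ ≤ 1`; the termwise
bound `‖Aʲ v‖ ≤ ‖Aʲ‖ ‖v‖` gives `‖S‖² ≤ ∑ⱼ ρ⁻ʲ ‖Aʲ‖²`; and shifting the index gives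
`‖S A v‖² = ρ (‖S v‖² - ‖v‖²) ≤ ρ ‖S v‖²`, i.e. `C = ρ^{-1/2} S A S⁻¹` is a contraction.
-/

open Filter
open scoped Matrix.Norms.L2Operator MatrixOrder ComplexOrder

namespace spectrum

variable {𝒜 : Type*} [NormedRing 𝒜] [NormedAlgebra ℂ 𝒜] [CompleteSpace 𝒜]

theorem eventually_norm_pow_le_pow (a : 𝒜) {t : ℝ} (ht : spectralRadius ℂ a < ENNReal.ofReal t) :
    ∀ᶠ n in atTop, ‖a ^ n‖ ≤ t ^ n := by
  have ht0 : 0 < t := ENNReal.ofReal_pos.mp (zero_le.trans_lt ht)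
  filter_upwards [(pow_norm_pow_one_div_tendsto_nhds_spectralRadius a).eventually_lt_const ht,
    eventually_ne_atTop 0] with n hroot hn
  rw [ENNReal.ofReal_lt_ofReal_iff ht0, one_div] at hroot
  calc ‖a ^ n‖ = (‖a ^ n‖ ^ (n⁻¹ : ℝ)) ^ n := (rpow_inv_natCast_pow (norm_nonneg _) hn).symm
    _ ≤ t ^ n := by gcongr

theorem summable_inv_pow_mul_norm_pow_sq (a : 𝒜) {ρ : ℝ}
    (hρ : spectralRadius ℂ a ^ 2 < ENNReal.ofReal ρ) :
    Summable fun j => ρ⁻¹ ^ j * ‖a ^ j‖ ^ 2 := by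
  have hρ0 : 0 < ρ := ENNReal.ofReal_pos.mp (zero_le.trans_lt hρ)
  have hσ : spectralRadius ℂ a < ENNReal.ofReal √ρ := by
    refine lt_of_pow_lt_pow_left' 2 ?_
    rwa [← ENNReal.ofReal_pow (sqrt_nonneg ρ), sq_sqrt hρ0.le]
  obtain ⟨t, ht0, hσt, htρ⟩ := ENNReal.lt_iff_exists_real_btwn.mp hσ
  have ht2 : t ^ 2 < ρ := (lt_sqrt ht0).mp ((ENNReal.ofReal_lt_ofReal_iff' ..).mp htρ).1
  have hgeom : Summable fun j : ℕ => (t ^ 2 / ρ) ^ j :=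
    summable_geometric_of_lt_one (by positivity) ((div_lt_one hρ0).mpr ht2)
  refine hgeom.of_norm_bounded_eventually_nat ?_
  filter_upwards [eventually_norm_pow_le_pow a hσt] with j hj
  rw [norm_of_nonneg (by positivity), div_pow, div_eq_inv_mul, ← inv_pow, ← pow_mul,
    mul_comm 2, pow_mul]
  gcongr

end spectrum

namespace Matrix

variable {n : Type*} [Fintype n]

theorem dotProduct_self_eq_norm_toLp_sq (v : n → ℝ) : v ⬝ᵥ v = ‖WithLp.toLp 2 v‖ ^ 2 := by
  rw [← real_inner_self_eq_norm_sq, EuclideanSpace.inner_toLp_toLp, star_trivial]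

theorem dotProduct_mulVec_self_eq {m : Type*} [Fintype m] (S : Matrix m n ℝ) (v : n → ℝ) :
    (S *ᵥ v) ⬝ᵥ (S *ᵥ v) = v ⬝ᵥ ((Sᵀ * S) *ᵥ v) := by
  rw [← mulVec_mulVec, dotProduct_mulVec v Sᵀ, vecMul_transpose]

variable [DecidableEq n]

theorem dotProduct_mulVec_self_le (M : Matrix n n ℝ) (v : n → ℝ) :
    (M *ᵥ v) ⬝ᵥ (M *ᵥ v) ≤ ‖M‖ ^ 2 * (v ⬝ᵥ v) := by
  rw [dotProduct_self_eq_norm_toLp_sq, dotProduct_self_eq_norm_toLp_sq, ← mul_pow]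
  gcongr
  exact (toEuclideanCLM (𝕜 := ℝ) M).le_opNorm (WithLp.toLp 2 v)

theorem l2_opNorm_sq_le_of_dotProduct_mulVec_self_le {M : Matrix n n ℝ} {c : ℝ} (hc : 0 ≤ c)
    (h : ∀ v, (M *ᵥ v) ⬝ᵥ (M *ᵥ v) ≤ c * (v ⬝ᵥ v)) : ‖M‖ ^ 2 ≤ c := by
  rw [← le_sqrt (norm_nonneg _) hc]
  refine (toEuclideanCLM (𝕜 := ℝ) M).opNorm_le_bound (sqrt_nonneg c) fun x => ?_
  obtain ⟨v, rfl⟩ : ∃ v, x = WithLp.toLp 2 v := ⟨x.ofLp, rfl⟩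
  refine (sq_le_sq₀ (norm_nonneg _) (by positivity)).mp ?_
  simpa [mul_pow, sq_sqrt hc, dotProduct_self_eq_norm_toLp_sq] using h v

theorem l2_opNorm_le_l2_opNorm_map_ofReal (M : Matrix n n ℝ) :
    ‖M‖ ≤ ‖M.map Complex.ofReal‖ := by
  have hnorm (w : n → ℝ) : ‖WithLp.toLp 2 (Complex.ofReal ∘ w)‖ = ‖WithLp.toLp 2 w‖ := by
    simp [EuclideanSpace.norm_eq]
  refine (toEuclideanCLM (𝕜 := ℝ) M).opNorm_le_bound (norm_nonneg _) fun x => ?_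
  obtain ⟨v, rfl⟩ : ∃ v, x = WithLp.toLp 2 v := ⟨x.ofLp, rfl⟩
  have h := (toEuclideanCLM (𝕜 := ℂ) (M.map Complex.ofReal)).le_opNorm
    (WithLp.toLp 2 (Complex.ofReal ∘ v))
  have hmulVec : M.map Complex.ofReal *ᵥ (Complex.ofReal ∘ v) = Complex.ofReal ∘ (M *ᵥ v) :=
    funext fun i => (Complex.ofRealHom.map_mulVec M v i).symm
  rwa [toEuclideanCLM_toLp, hmulVec, hnorm, hnorm] at h

theorem summable_inv_pow_mul_l2_opNorm_pow_sq (A : Matrix n n ℝ) {ρ : ℝ}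
    (hρ : spectralRadius ℂ (A.map Complex.ofReal) ^ 2 < ENNReal.ofReal ρ) :
    Summable fun j => ρ⁻¹ ^ j * ‖A ^ j‖ ^ 2 := by
  have hρ0 : 0 < ρ := ENNReal.ofReal_pos.mp (zero_le.trans_lt hρ)
  refine (spectrum.summable_inv_pow_mul_norm_pow_sq _ hρ).of_nonneg_of_le
    (fun j => by positivity) fun j => ?_
  have hpow : (A ^ j).map Complex.ofReal = A.map Complex.ofReal ^ j :=
    map_pow (Complex.ofRealHom.mapMatrix) A j
  rw [← hpow]
  gcongr
  exact l2_opNorm_le_l2_opNorm_map_ofReal _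

section WeightedGram

variable (A : Matrix n n ℝ) (ρ : ℝ)

noncomputable def weightedGram : Matrix n n ℝ := ∑' j : ℕ, ρ⁻¹ ^ j • ((A ^ j)ᵀ * A ^ j)

variable {A ρ} (hρ : 0 < ρ) (hA : Summable fun j => ρ⁻¹ ^ j * ‖A ^ j‖ ^ 2)
include hρ hA

theorem summable_weightedGram :
    Summable fun j : ℕ => ρ⁻¹ ^ j • ((A ^ j)ᵀ * A ^ j) := by
  refine Summable.of_norm (hA.congr fun j => ?_)
  rw [norm_smul, norm_of_nonneg (by positivity), ← conjTranspose_eq_transpose_of_trivial,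
    l2_opNorm_conjTranspose_mul_self, sq]

theorem hasSum_dotProduct_weightedGram_mulVec (v : n → ℝ) :
    HasSum (fun j => ρ⁻¹ ^ j * ((A ^ j *ᵥ v) ⬝ᵥ (A ^ j *ᵥ v))) (v ⬝ᵥ (weightedGram A ρ *ᵥ v)) := by
  let quadForm : Matrix n n ℝ →+ ℝ :=
    AddMonoidHom.mk' (fun M => v ⬝ᵥ (M *ᵥ v)) fun M N => by rw [add_mulVec, dotProduct_add]
  have hcont : Continuous quadForm := by
    change Continuous fun M : Matrix n n ℝ => v ⬝ᵥ (M *ᵥ v)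
    unfold dotProduct mulVec
    fun_prop
  refine ((summable_weightedGram hρ hA).hasSum.map quadForm hcont).congr_fun fun j => ?_
  simp [quadForm, smul_mulVec, dotProduct_mulVec_self_eq]

theorem dotProduct_self_le_dotProduct_weightedGram_mulVec (v : n → ℝ) :
    v ⬝ᵥ v ≤ v ⬝ᵥ (weightedGram A ρ *ᵥ v) := by
  simpa using le_hasSum (hasSum_dotProduct_weightedGram_mulVec hρ hA v) 0
    fun j _ => mul_nonneg (by positivity) (dotProduct_self_star_nonneg _)

theorem dotProduct_weightedGram_mulVec_le (v : n → ℝ) :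
    v ⬝ᵥ (weightedGram A ρ *ᵥ v) ≤ (∑' j, ρ⁻¹ ^ j * ‖A ^ j‖ ^ 2) * (v ⬝ᵥ v) := by
  refine hasSum_le (fun j => ?_) (hasSum_dotProduct_weightedGram_mulVec hρ hA v)
    (hA.hasSum.mul_right _)
  rw [mul_assoc]
  gcongr
  exact dotProduct_mulVec_self_le _ v

theorem dotProduct_weightedGram_mulVec_mulVec (v : n → ℝ) :
    (A *ᵥ v) ⬝ᵥ (weightedGram A ρ *ᵥ (A *ᵥ v))
      = ρ * (v ⬝ᵥ (weightedGram A ρ *ᵥ v) - v ⬝ᵥ v) := by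
  have hshift := ((hasSum_nat_add_iff' 1).mpr
    (hasSum_dotProduct_weightedGram_mulVec hρ hA v)).mul_left ρ
  rw [Finset.sum_range_one, pow_zero, pow_zero, one_mul, one_mulVec] at hshift
  refine (hasSum_dotProduct_weightedGram_mulVec hρ hA (A *ᵥ v)).unique (hshift.congr_fun ?_)
  intro j
  rw [mulVec_mulVec, ← pow_succ, pow_succ ρ⁻¹]
  field_simp

theorem posDef_weightedGram : (weightedGram A ρ).PosDef := by
  have hsymm : (weightedGram A ρ)ᵀ = weightedGram A ρ := by
    simp only [weightedGram, transpose_tsum, transpose_smul, transpose_mul, transpose_transpose]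
  refine .of_dotProduct_mulVec_pos (by rwa [IsHermitian, conjTranspose_eq_transpose_of_trivial])
    fun v hv => ?_
  rw [star_trivial]
  exact (dotProduct_star_self_pos_iff.mpr hv).trans_le
    (dotProduct_self_le_dotProduct_weightedGram_mulVec hρ hA v)

end WeightedGram

theorem PosDef.exists_isUnit_conjTranspose_mul_self_eq {𝕜 : Type*} [RCLike 𝕜] {Q : Matrix n n 𝕜}
    (hQ : Q.PosDef) : ∃ S : Matrix n n 𝕜, IsUnit S ∧ Sᴴ * S = Q := by
  refine ⟨CFC.sqrt Q, CFC.isUnit_sqrt_iff_isStrictlyPositive.mpr hQ.isStrictlyPositive, ?_⟩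
  rw [← star_eq_conjTranspose, (CFC.sqrt_nonneg Q).isSelfAdjoint.star_eq,
    CFC.sqrt_mul_sqrt_self Q hQ.posSemidef.nonneg]

theorem l2_opNorm_mul_inv_sq_le_of_dotProduct_mulVec_le {S T : Matrix n n ℝ} (hS : IsUnit S)
    {c : ℝ} (hc : 0 ≤ c)
    (h : ∀ v, (T *ᵥ v) ⬝ᵥ (T *ᵥ v) ≤ c * ((S *ᵥ v) ⬝ᵥ (S *ᵥ v))) : ‖T * S⁻¹‖ ^ 2 ≤ c :=
  l2_opNorm_sq_le_of_dotProduct_mulVec_self_le hc fun w => by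
    simpa [mulVec_mulVec, mul_nonsing_inv _ ((isUnit_iff_isUnit_det S).mp hS)] using h (S⁻¹ *ᵥ w)

theorem l2_opNorm_mul_l2_opNorm_inv_le {S : Matrix n n ℝ} {F : ℝ} (hS : IsUnit S)
    (hinv : ‖S⁻¹‖ ≤ 1) (hF : ‖S‖ ^ 2 ≤ F) : ‖S‖ * ‖S⁻¹‖ ≤ F := by
  rcases isEmpty_or_nonempty n with hn | hn
  · simpa [Subsingleton.elim S 0] using (sq_nonneg _).trans hF
  have h1 : 1 ≤ ‖S‖ * ‖S⁻¹‖ := by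
    simpa [mul_nonsing_inv _ ((isUnit_iff_isUnit_det S).mp hS)] using l2_opNorm_mul S S⁻¹
  have hS1 : 1 ≤ ‖S‖ := h1.trans (mul_le_of_le_one_right (norm_nonneg _) hinv)
  nlinarith [norm_nonneg S⁻¹]

theorem exists_similar_contraction_of_summable {A : Matrix n n ℝ} {ρ : ℝ} (hρ : 0 < ρ)
    (hA : Summable fun j => ρ⁻¹ ^ j * ‖A ^ j‖ ^ 2) :
    ∃ S C : Matrix n n ℝ, IsUnit S ∧ ‖C‖ ≤ 1 ∧
      ‖S‖ * ‖S⁻¹‖ ≤ ∑' j, ρ⁻¹ ^ j * ‖A ^ j‖ ^ 2 ∧ A = √ρ • (S⁻¹ * C * S) := by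
  obtain ⟨S, hS, hSQ⟩ := (posDef_weightedGram hρ hA).exists_isUnit_conjTranspose_mul_self_eq
  rw [conjTranspose_eq_transpose_of_trivial] at hSQ
  have hSv (v : n → ℝ) : (S *ᵥ v) ⬝ᵥ (S *ᵥ v) = v ⬝ᵥ (weightedGram A ρ *ᵥ v) := by
    rw [dotProduct_mulVec_self_eq, hSQ]
  have hinv : ‖S⁻¹‖ ≤ 1 := by
    have h := l2_opNorm_mul_inv_sq_le_of_dotProduct_mulVec_le (T := 1) hS zero_le_one fun v => by
      simpa [hSv] using dotProduct_self_le_dotProduct_weightedGram_mulVec hρ hA v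
    rwa [Matrix.one_mul, sq_le_one_iff₀ (norm_nonneg _)] at h
  have hnorm : ‖S‖ ^ 2 ≤ ∑' j, ρ⁻¹ ^ j * ‖A ^ j‖ ^ 2 :=
    l2_opNorm_sq_le_of_dotProduct_mulVec_self_le (tsum_nonneg fun j => by positivity)
      fun v => (hSv v).trans_le (dotProduct_weightedGram_mulVec_le hρ hA v)
  have hconj : ‖S * A * S⁻¹‖ ^ 2 ≤ ρ := by
    refine l2_opNorm_mul_inv_sq_le_of_dotProduct_mulVec_le hS hρ.le fun v => ?_
    rw [← mulVec_mulVec, hSv, hSv, dotProduct_weightedGram_mulVec_mulVec hρ hA]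
    have hv : 0 ≤ v ⬝ᵥ v := dotProduct_self_star_nonneg v
    nlinarith
  have hsqrt : 0 < √ρ := sqrt_pos.mpr hρ
  refine ⟨S, (√ρ)⁻¹ • (S * A * S⁻¹), hS, ?_, l2_opNorm_mul_l2_opNorm_inv_le hS hinv hnorm, ?_⟩
  · rw [norm_smul, norm_inv, norm_of_nonneg hsqrt.le, inv_mul_le_one₀ hsqrt]
    exact (le_sqrt (norm_nonneg _) hρ.le).mpr hconj
  · have hdet := (isUnit_iff_isUnit_det S).mp hS
    rw [mul_smul_comm, smul_mul_assoc, smul_smul, mul_inv_cancel₀ hsqrt.ne', one_smul]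
    calc A = S⁻¹ * S * A * (S⁻¹ * S) := by
          rw [nonsing_inv_mul _ hdet, Matrix.one_mul, Matrix.mul_one]
      _ = S⁻¹ * (S * A * S⁻¹) * S := by simp only [Matrix.mul_assoc]

end Matrix

theorem rota_similarity_general {m : ℕ} (A : Matrix (Fin m) (Fin m) ℝ) (ρ : ℝ)
    (hρlt : (spectralRadius ℂ (A.map (Complex.ofReal))) ^ 2 < ENNReal.ofReal ρ)
    (hρ0 : 0 < ρ) :
    Summable (fun j : ℕ => ρ⁻¹ ^ j * matOpNorm (A ^ j) ^ 2) ∧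
    ∃ S C : Matrix (Fin m) (Fin m) ℝ, IsUnit S ∧ matOpNorm C ≤ 1 ∧
      matOpNorm S * matOpNorm S⁻¹ ≤ ∑' j : ℕ, ρ⁻¹ ^ j * matOpNorm (A ^ j) ^ 2 ∧
      A = Real.sqrt ρ • (S⁻¹ * C * S) :=
  have hA := summable_inv_pow_mul_l2_opNorm_pow_sq A hρlt
  ⟨hA, exists_similar_contraction_of_summable hρ0 hA⟩

/-- Rota's similarity theorem, quantitative form: if the spectral radius of `A` is `< 1`
and `ρ(A)² < ρ < 1`, then `∑_j ρ^{-j} ‖A^j‖²` converges and there are an invertible `S`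
with `‖S‖‖S⁻¹‖ ≤ ∑_j ρ^{-j} ‖A^j‖²` and a contraction `C` with `A = √ρ · S⁻¹ C S`. -/
theorem rota_similarity {m : ℕ} (A : Matrix (Fin m) (Fin m) ℝ) (ρ : ℝ)
    (hspec : spectralRadius ℂ (A.map (Complex.ofReal)) < 1)
    (hρlt : (spectralRadius ℂ (A.map (Complex.ofReal))) ^ 2 < ENNReal.ofReal ρ)
    (hρ1 : ρ < 1) (hρ0 : 0 < ρ) :
    Summable (fun j : ℕ => ρ⁻¹ ^ j * matOpNorm (A ^ j) ^ 2) ∧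
    ∃ S C : Matrix (Fin m) (Fin m) ℝ, IsUnit S ∧ matOpNorm C ≤ 1 ∧
      matOpNorm S * matOpNorm S⁻¹ ≤ ∑' j : ℕ, ρ⁻¹ ^ j * matOpNorm (A ^ j) ^ 2 ∧
      A = Real.sqrt ρ • (S⁻¹ * C * S) :=
  rota_similarity_general A ρ hρlt hρ0
end

section
/- Let (h_j)_{j=0}^{n-1} and (d_j)_{j=0}^{n-1} be nonnegative reals with h_0 ≤ d_0 and h_j ≤ d_j + c(Σ_{ℓ=0}^{j-1} √ρ_{j-ℓ} √h_ℓ)² for j ≥ 1, where c ≥ 0 and ρ_1, …, ρ_{n-1} ≥ 0 satisfy (Σ_{ℓ=1}^{n-1} √ρ_ℓ)² ≤ R. Then Σ_{j=0}^{n-1} h_j ≤ (Σ_{ℓ=0}^{n-1} (cR)^ℓ) · Σ_{j=0}^{n-1} d_j. -/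
/-!
Write `S k = ∑_{j<k} h j` and `D = ∑_{j<n} d j`. The recursion gives `S (k+1) ≤ D + cR · S k`,
which iterates to the geometric bound. That step is Young's inequality for the convolution of
`√ρ` with `√h`: by weighted Cauchy–Schwarz, `(∑_ℓ √ρ_{j-ℓ} √h_ℓ)² ≤ (∑ √ρ) · ∑_ℓ √ρ_{j-ℓ} h_ℓ`,
and after summing over `j` each `h_ℓ` collects a second factor of at most `∑ √ρ`.
-/

open Finset Real

namespace Finset

variable {M R : Type*} [AddCommMonoid M] [CommRing R] [LinearOrder R] [IsStrictOrderedRing R]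

theorem sum_range_apply_sub (f : ℕ → M) (j : ℕ) :
    ∑ ℓ ∈ range j, f (j - ℓ) = ∑ m ∈ Icc 1 j, f m :=
  sum_nbij' (j - ·) (j - ·) (by intro; simp; omega) (by intro; simp; omega)
    (by intro; simp; omega) (by intro; simp; omega) (fun _ _ => rfl)

theorem sum_Ioc_apply_sub (f : ℕ → M) (ℓ k : ℕ) :
    ∑ j ∈ Ioc ℓ k, f (j - ℓ) = ∑ m ∈ Icc 1 (k - ℓ), f m :=
  sum_nbij' (· - ℓ) (· + ℓ) (by intro; simp; omega) (by intro; simp; omega)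
    (by intro; simp; omega) (by intro; simp) (fun _ _ => rfl)

theorem sum_sq_convolution_le {a : ℕ → R} (ha : ∀ m, 0 ≤ a m) (x : ℕ → R) (k : ℕ) :
    ∑ j ∈ range (k + 1), (∑ ℓ ∈ range j, a (j - ℓ) * x ℓ) ^ 2
      ≤ (∑ m ∈ Icc 1 k, a m) ^ 2 * ∑ ℓ ∈ range k, x ℓ ^ 2 := by
  set A := ∑ m ∈ Icc 1 k, a m
  have hA : ∀ i ≤ k, ∑ m ∈ Icc 1 i, a m ≤ A := fun i hi =>
    sum_le_sum_of_subset_of_nonneg (Icc_subset_Icc_right hi) fun m _ _ => ha m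
  have cauchy_schwarz : ∀ j ∈ range (k + 1), (∑ ℓ ∈ range j, a (j - ℓ) * x ℓ) ^ 2
      ≤ A * ∑ ℓ ∈ range j, a (j - ℓ) * x ℓ ^ 2 := fun j hj => calc
    _ ≤ (∑ ℓ ∈ range j, a (j - ℓ)) * ∑ ℓ ∈ range j, a (j - ℓ) * x ℓ ^ 2 :=
      sum_sq_le_sum_mul_sum_of_sq_le_mul _ (fun ℓ _ => ha _)
        (fun ℓ _ => mul_nonneg (ha _) (sq_nonneg _)) (fun ℓ _ => le_of_eq (by ring))
    _ ≤ A * ∑ ℓ ∈ range j, a (j - ℓ) * x ℓ ^ 2 := by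
      rw [sum_range_apply_sub]
      exact mul_le_mul_of_nonneg_right (hA j (by simpa [Nat.lt_succ_iff] using hj))
        (sum_nonneg fun ℓ _ => mul_nonneg (ha _) (sq_nonneg _))
  calc _ ≤ ∑ j ∈ range (k + 1), A * ∑ ℓ ∈ range j, a (j - ℓ) * x ℓ ^ 2 :=
        sum_le_sum cauchy_schwarz
    _ = A * ∑ ℓ ∈ range k, (∑ j ∈ Ioc ℓ k, a (j - ℓ)) * x ℓ ^ 2 := by
      simp_rw [← mul_sum, sum_mul]
      congr 1
      exact sum_comm' fun j ℓ => by simp; omega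
    _ ≤ A * ∑ ℓ ∈ range k, A * x ℓ ^ 2 := by
      gcongr with ℓ
      · exact sum_nonneg fun m _ => ha m
      · rw [sum_Ioc_apply_sub]; exact hA _ (Nat.sub_le _ _)
    _ = A ^ 2 * ∑ ℓ ∈ range k, x ℓ ^ 2 := by rw [← mul_sum]; ring

end Finset

theorem le_geom_sum_mul_of_le_add_mul {R : Type*} [CommRing R] [LinearOrder R]
    [IsStrictOrderedRing R] {S : ℕ → R} {q D : R} (hq : 0 ≤ q) (hS₀ : S 0 ≤ 0) {n : ℕ}
    (hstep : ∀ k < n, S (k + 1) ≤ D + q * S k) :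
    S n ≤ (∑ ℓ ∈ range n, q ^ ℓ) * D := by
  induction n with
  | zero => simpa using hS₀
  | succ n ih => calc
    S (n + 1) ≤ D + q * ((∑ ℓ ∈ range n, q ^ ℓ) * D) :=
      (hstep n n.lt_succ_self).trans
        (by gcongr; exact ih fun k hk => hstep k (hk.trans n.lt_succ_self))
    _ = (∑ ℓ ∈ range (n + 1), q ^ ℓ) * D := by rw [geom_sum_succ]; ring

theorem convolution_recursion_general (n : ℕ) (h d ρ : ℕ → ℝ) (c R : ℝ)
    (hc : 0 ≤ c) (hhn : ∀ j, 0 ≤ h j) (hdn : ∀ j, 0 ≤ d j)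
    (h0 : h 0 ≤ d 0)
    (hrec : ∀ j, 1 ≤ j → j ≤ n - 1 →
      h j ≤ d j + c * (∑ ℓ ∈ range j, Real.sqrt (ρ (j - ℓ)) * Real.sqrt (h ℓ)) ^ 2)
    (hR : (∑ ℓ ∈ Icc 1 (n - 1), Real.sqrt (ρ ℓ)) ^ 2 ≤ R) :
    ∑ j ∈ range n, h j ≤ (∑ ℓ ∈ range n, (c * R) ^ ℓ) * ∑ j ∈ range n, d j := by
  set conv := fun j => ∑ ℓ ∈ range j, √(ρ (j - ℓ)) * √(h ℓ)
  have hrec' : ∀ j < n, h j ≤ d j + c * conv j ^ 2 := by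
    rintro (_ | j) hj
    · simpa [conv] using h0
    · exact hrec _ j.succ_pos (by omega)
  have young : ∀ k < n, ∑ j ∈ range (k + 1), conv j ^ 2 ≤ R * ∑ j ∈ range k, h j := by
    intro k hk
    calc _ ≤ (∑ m ∈ Icc 1 k, √(ρ m)) ^ 2 * ∑ ℓ ∈ range k, √(h ℓ) ^ 2 :=
          sum_sq_convolution_le (fun _ => sqrt_nonneg _) _ k
      _ ≤ R * ∑ j ∈ range k, h j := by
        simp_rw [sq_sqrt (hhn _)]
        gcongr
        · exact sum_nonneg fun j _ => hhn j
        refine le_trans ?_ hR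
        gcongr
        omega
  refine le_geom_sum_mul_of_le_add_mul (S := fun k => ∑ j ∈ range k, h j)
    (mul_nonneg hc ((sq_nonneg _).trans hR)) (by simp) fun k hk => ?_
  calc ∑ j ∈ range (k + 1), h j
      ≤ ∑ j ∈ range (k + 1), d j + c * ∑ j ∈ range (k + 1), conv j ^ 2 := by
        rw [mul_sum, ← sum_add_distrib]
        exact sum_le_sum fun j hj => hrec' j (by simp at hj; omega)
    _ ≤ ∑ j ∈ range n, d j + c * (R * ∑ j ∈ range k, h j) := by
      gcongr
      · exact fun j _ _ => hdn j
      · exact hk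
      · exact young k hk
    _ = _ := by ring

/-- Convolution-type recursion from the proof of Theorem 5.1(iii):
if `h 0 ≤ d 0` and `h j ≤ d j + c * (∑_{ℓ=0}^{j-1} √ρ_{j-ℓ} √h_ℓ)²` for `1 ≤ j ≤ n-1`,
with `(∑_{ℓ=1}^{n-1} √ρ_ℓ)² ≤ R`, then
`∑_{j=0}^{n-1} h j ≤ (∑_{ℓ=0}^{n-1} (cR)^ℓ) * ∑_{j=0}^{n-1} d j`. -/
theorem convolution_recursion (n : ℕ) (hn : 1 ≤ n) (h d ρ : ℕ → ℝ) (c R : ℝ)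
    (hc : 0 ≤ c) (hhn : ∀ j, 0 ≤ h j) (hdn : ∀ j, 0 ≤ d j) (hρn : ∀ j, 0 ≤ ρ j)
    (h0 : h 0 ≤ d 0)
    (hrec : ∀ j, 1 ≤ j → j ≤ n - 1 →
      h j ≤ d j + c * (∑ ℓ ∈ range j, Real.sqrt (ρ (j - ℓ)) * Real.sqrt (h ℓ)) ^ 2)
    (hR : (∑ ℓ ∈ Icc 1 (n - 1), Real.sqrt (ρ ℓ)) ^ 2 ≤ R) :
    ∑ j ∈ range n, h j ≤ (∑ ℓ ∈ range n, (c * R) ^ ℓ) * ∑ j ∈ range n, d j :=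
  convolution_recursion_general n h d ρ c R hc hhn hdn h0 hrec hR
end
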